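/- Let V₁, V₂ : ℝ^d → ℝ be bounded and uniformly continuous. Let (φ_n)_{n≥1} ⊂ L²(ℝ^d) with ‖φ_n‖_{L²(ℝ^d)} = 1 for all n, and let (η_n)_{n≥1} ⊂ L²(ℝ^d) with ‖η_n‖_{L²(ℝ^d)} = 1 concentrate at the origin, i.e. for every γ > 0, ∫_{|q| > γ} |η_n(q)|² dq → 0 as n → ∞. Then ‖(V₁(p + q) + V₂(p − q) − V₁(p) − V₂(p)) φ_n(p) η_n(q)‖_{L²(ℝ^{2d})} → 0 as n → ∞, where the L² norm is taken over (p, q) ∈ ℝ^d × ℝ^d. -/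

import Mathlib

noncomputable section

open MeasureTheory Complex Filter Topology Set
open scoped Real ENNReal Topology ComplexConjugate

namespace Incomm

/-- Euclidean space `ℝ^d`. -/
abbrev Ed (d : ℕ) : Type := EuclideanSpace ℝ (Fin d)

/-- `ℝ^{2d}` realized as `ℝ^d × ℝ^d`, with variables `r̃ = (r, r')`. -/
abbrev X2 (d : ℕ) : Type := Ed d × Ed d

/-- Directional (partial) derivative of a function in direction `v`. -/
def pderiv {E : Type*} [NormedAddCommGroup E] [NormedSpace ℝ E] (v : E) (φ : E → ℂ) : E → ℂ :=
  fun x => fderiv ℝ φ x v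

/-- Second directional derivative in direction `v`. -/
def pderiv2 {E : Type*} [NormedAddCommGroup E] [NormedSpace ℝ E] (v : E) (φ : E → ℂ) : E → ℂ :=
  pderiv v (pderiv v φ)

/-- `i`-th standard basis vector of `ℝ^d`. -/
def eb {d : ℕ} (i : Fin d) : Ed d := EuclideanSpace.single i (1 : ℝ)

/-- The direction corresponding to `∂_{r_i} + ∂_{r_i'}`. -/
def plusDir {d : ℕ} (i : Fin d) : X2 d := (eb i, eb i)

/-- The direction corresponding to `∂_{r_i} - ∂_{r_i'}`. -/
def minusDir {d : ℕ} (i : Fin d) : X2 d := (eb i, -eb i)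

/-- The standard basis of `ℝ^{2d} = ℝ^d × ℝ^d`. -/
def basis2 {d : ℕ} : Fin d ⊕ Fin d → X2 d :=
  Sum.elim (fun i => (eb i, 0)) (fun i => (0, eb i))

/-- Euclidean dot product on `ℝ^d`. -/
def dotE {d : ℕ} (a b : Ed d) : ℝ := ∑ i, a i * b i

/-- Euclidean dot product on `ℝ^{2d}`. -/
def dot2 {d : ℕ} (a b : X2 d) : ℝ := dotE a.1 b.1 + dotE a.2 b.2

/-- Smooth compactly supported test functions. -/
def IsTest {E : Type*} [NormedAddCommGroup E] [NormedSpace ℝ E] (φ : E → ℂ) : Prop :=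
  ContDiff ℝ (⊤ : ℕ∞) φ ∧ HasCompactSupport φ

section Ops

variable {d : ℕ}

/-- `D̃ = Σ_i (∂_{r_i} + ∂_{r_i'})²`. -/
def Dtilde (φ : X2 d → ℂ) : X2 d → ℂ := fun x => ∑ i, pderiv2 (plusDir i) φ x

/-- `Σ_i (∂_{r_i} - ∂_{r_i'})²`. -/
def Dminus (φ : X2 d → ℂ) : X2 d → ℂ := fun x => ∑ i, pderiv2 (minusDir i) φ x

/-- The extended Schrödinger operator
`H̃ = -(1/2) Σ_i (∂_{r_i} + ∂_{r_i'})² + V₁(r) + V₂(r')` acting on functions. -/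
def Hext (V₁ V₂ : Ed d → ℝ) (φ : X2 d → ℂ) : X2 d → ℂ := fun x =>
  -(1/2 : ℂ) * Dtilde φ x + ((V₁ x.1 : ℂ) + (V₂ x.2 : ℂ)) * φ x

/-- The regularized Schrödinger operator `H̃^δ = H̃ - (δ/2) Σ_i (∂_{r_i} - ∂_{r_i'})²`. -/
def Hreg (V₁ V₂ : Ed d → ℝ) (δ : ℝ) (φ : X2 d → ℂ) : X2 d → ℂ := fun x =>
  Hext V₁ V₂ φ x - (δ/2 : ℂ) * Dminus φ x

/-- The Schrödinger operator of the incommensurate system,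
`H = -(1/2)Δ + V₁ + V₂` on `ℝ^d`. -/
def Hop (V₁ V₂ : Ed d → ℝ) (φ : Ed d → ℂ) : Ed d → ℂ := fun x =>
  -(1/2 : ℂ) * ∑ i, pderiv2 (eb i) φ x + ((V₁ x : ℂ) + (V₂ x : ℂ)) * φ x

end Ops

section Weak

variable {E : Type*} [NormedAddCommGroup E] [NormedSpace ℝ E] [MeasurableSpace E]

/-- `f = L u` in the distributional sense (pairing `⟨f, φ⟩ = ⟨u, Lφ⟩` against the given class
of test functions, for a formally self-adjoint operator `L`). -/
def WeakEq (μ : Measure E) (Tst : (E → ℂ) → Prop) (L : (E → ℂ) → E → ℂ) (u f : E → ℂ) : Prop :=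
  ∀ φ, Tst φ → ∫ x, f x * conj (φ x) ∂μ = ∫ x, u x * conj (L φ x) ∂μ

/-- `g` is the weak directional derivative of `u` in direction `v`. -/
def IsWeakDeriv (μ : Measure E) (Tst : (E → ℂ) → Prop) (v : E) (u g : E → ℂ) : Prop :=
  ∀ φ, Tst φ → ∫ x, g x * conj (φ x) ∂μ = -∫ x, u x * conj (pderiv v φ x) ∂μ

/-- `h` is the weak second derivative of `u` in directions `v, w`. -/
def IsWeakDeriv2 (μ : Measure E) (Tst : (E → ℂ) → Prop) (v w : E) (u h : E → ℂ) : Prop :=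
  ∀ φ, Tst φ → ∫ x, h x * conj (φ x) ∂μ = ∫ x, u x * conj (pderiv v (pderiv w φ) x) ∂μ

/-- Sobolev regularity `H²` with respect to a measure and a class of test functions:
`u` and all its weak derivatives up to order two are in `L²(μ)`. -/
def MemH2On (μ : Measure E) (Tst : (E → ℂ) → Prop) (u : E → ℂ) : Prop :=
  MemLp u 2 μ ∧
  (∀ v : E, ∃ g, MemLp g 2 μ ∧ IsWeakDeriv μ Tst v u g) ∧
  (∀ v w : E, ∃ h, MemLp h 2 μ ∧ IsWeakDeriv2 μ Tst v w u h)

end Weak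

section FullSpace

variable {E : Type*} [NormedAddCommGroup E] [NormedSpace ℝ E] [MeasureSpace E]

/-- The Sobolev space `H²` on all of the space. -/
def MemH2 (u : E → ℂ) : Prop := MemH2On volume IsTest u

/-- Locally `L²`. -/
def MemL2loc (u : E → ℂ) : Prop := ∀ K : Set E, IsCompact K → MemLp u 2 (volume.restrict K)

/-- The local Sobolev space `H²_loc`. -/
def MemH2loc (u : E → ℂ) : Prop :=
  MemL2loc u ∧
  (∀ v : E, ∃ g, MemL2loc g ∧ IsWeakDeriv volume IsTest v u g) ∧
  (∀ v w : E, ∃ h, MemL2loc h ∧ IsWeakDeriv2 volume IsTest v w u h)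

end FullSpace

/-! ### Graphs of unbounded operators -/

section Graph

variable {H : Type*} [NormedAddCommGroup H] [InnerProductSpace ℂ H]

/-- The graph of the adjoint of the (densely defined) operator with graph `G`:
all pairs `(v, w)` with `⟪v, Tu⟫ = ⟪w, u⟫` for all `u` in the domain. -/
def adjGraph (G : Set (H × H)) : Set (H × H) :=
  {p | ∀ q ∈ G, (@inner ℂ _ _ p.1 q.2) = @inner ℂ _ _ p.2 q.1}

/-- The operator with graph `G` is symmetric: `⟪Tu, v⟫ = ⟪u, Tv⟫` on the domain. -/
def IsSymmGraph (G : Set (H × H)) : Prop :=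
  ∀ p ∈ G, ∀ q ∈ G, (@inner ℂ _ _ p.2 q.1) = @inner ℂ _ _ p.1 q.2

/-- The operator with graph `G` is self-adjoint. -/
def IsSelfAdjGraph (G : Set (H × H)) : Prop := adjGraph G = G

/-- The operator with graph `G` is essentially self-adjoint: its closure is self-adjoint. -/
def EssSelfAdj (G : Set (H × H)) : Prop := IsSelfAdjGraph (closure G)

/-- `z` belongs to the resolvent set of the operator with graph `G`:
`T - z` is a bijection from the domain onto `H` with bounded inverse. -/
def graphResolvent (G : Set (H × H)) : Set ℂ :=
  {z | ∃ R : H →L[ℂ] H, (∀ p ∈ G, R (p.2 - z • p.1) = p.1) ∧ ∀ v : H, ∃ p ∈ G, p.2 - z • p.1 = v}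

/-- The spectrum of the operator with graph `G`. -/
def graphSpectrum (G : Set (H × H)) : Set ℂ := (graphResolvent G)ᶜ

/-- `R` is the resolvent `(T - z)⁻¹` of the operator with graph `G`. -/
def IsResolventAt (G : Set (H × H)) (z : ℂ) (R : H →L[ℂ] H) : Prop :=
  (∀ p ∈ G, R (p.2 - z • p.1) = p.1) ∧ ∀ v : H, ∃ p ∈ G, p.2 - z • p.1 = v

end Graph

/-- `L²(μ)` as a Hilbert space. -/
abbrev L2M {E : Type*} [MeasurableSpace E] (μ : Measure E) := Lp ℂ 2 μ

/-- The graph of a differential operator `L` with domain `dom`, the action being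
taken in the distributional sense against the test class `Tst`. -/
def graphOfM {E : Type*} [NormedAddCommGroup E] [NormedSpace ℝ E] [MeasurableSpace E]
    (μ : Measure E) (dom : (E → ℂ) → Prop) (Tst : (E → ℂ) → Prop)
    (L : (E → ℂ) → E → ℂ) : Set (L2M μ × L2M μ) :=
  {p | dom ⇑p.1 ∧ WeakEq μ Tst L ⇑p.1 ⇑p.2}

/-! ### Lattices, cells and periodicity -/

section Lat

variable {d : ℕ}

/-- `A α` for a real vector `α`. -/
def latVecR (A : Matrix (Fin d) (Fin d) ℝ) (α : Fin d → ℝ) : Ed d :=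
  (EuclideanSpace.equiv (Fin d) ℝ).symm (fun i => ∑ j, A i j * α j)

/-- The lattice vector `A m`, `m ∈ ℤ^d`. -/
def latVec (A : Matrix (Fin d) (Fin d) ℝ) (m : Fin d → ℤ) : Ed d :=
  latVecR A (fun j => (m j : ℝ))

/-- The Bravais lattice `R = {A n : n ∈ ℤ^d}`. -/
def lattice (A : Matrix (Fin d) (Fin d) ℝ) : Set (Ed d) := Set.range (latVec A)

/-- The unit cell `Γ = {A α : α ∈ [0,1)^d}`. -/
def cell (A : Matrix (Fin d) (Fin d) ℝ) : Set (Ed d) :=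
  latVecR A '' {α | ∀ i, α i ∈ Set.Ico (0:ℝ) 1}

/-- The reciprocal matrix `2π A^{-T}`. -/
def recipMat (A : Matrix (Fin d) (Fin d) ℝ) : Matrix (Fin d) (Fin d) ℝ :=
  (2 * Real.pi) • (A⁻¹).transpose

/-- The reciprocal unit cell `Γ* = {2π A^{-T} α : α ∈ [0,1)^d}`. -/
def recipCell (A : Matrix (Fin d) (Fin d) ℝ) : Set (Ed d) := cell (recipMat A)

/-- Vectors of the product lattice `R̃ = R₁ × R₂`. -/
def latVec2 (A₁ A₂ : Matrix (Fin d) (Fin d) ℝ) (mn : (Fin d → ℤ) × (Fin d → ℤ)) : X2 d :=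
  (latVec A₁ mn.1, latVec A₂ mn.2)

/-- The unit cell `Γ̃ = Γ₁ × Γ₂` in `ℝ^{2d}`. -/
def cell2 (A₁ A₂ : Matrix (Fin d) (Fin d) ℝ) : Set (X2 d) := (cell A₁) ×ˢ (cell A₂)

/-- The reciprocal unit cell `Γ̃* = Γ₁* × Γ₂*`. -/
def recipCell2 (A₁ A₂ : Matrix (Fin d) (Fin d) ℝ) : Set (X2 d) :=
  (recipCell A₁) ×ˢ (recipCell A₂)

/-- Lebesgue measure restricted to the cell `Γ̃`; this realizes `L²(Γ̃)` and `L²(T^{2d})`. -/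
def μcell (A₁ A₂ : Matrix (Fin d) (Fin d) ℝ) : Measure (X2 d) :=
  (volume : Measure (X2 d)).restrict (cell2 A₁ A₂)

/-- `V` is periodic with respect to the lattice of `A`. -/
def PeriodicV (A : Matrix (Fin d) (Fin d) ℝ) (V : Ed d → ℝ) : Prop :=
  ∀ m : Fin d → ℤ, ∀ x, V (x + latVec A m) = V x

/-- Smooth `R̃`-periodic test functions (test functions on the torus `T^{2d}`). -/
def IsPerTest (A₁ A₂ : Matrix (Fin d) (Fin d) ℝ) (φ : X2 d → ℂ) : Prop :=
  ContDiff ℝ (⊤ : ℕ∞) φ ∧ ∀ mn x, φ (x + latVec2 A₁ A₂ mn) = φ x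

/-- Smooth `k̃`-quasi-periodic test functions. -/
def IsQPerTest (A₁ A₂ : Matrix (Fin d) (Fin d) ℝ) (k : X2 d) (φ : X2 d → ℂ) : Prop :=
  ContDiff ℝ (⊤ : ℕ∞) φ ∧ ∀ mn x,
    φ (x + latVec2 A₁ A₂ mn) =
      Complex.exp (Complex.I * (dot2 k (latVec2 A₁ A₂ mn) : ℂ)) * φ x

/-- `u` is a.e. `R̃`-periodic. -/
def PerAE (A₁ A₂ : Matrix (Fin d) (Fin d) ℝ) (u : X2 d → ℂ) : Prop :=
  ∀ mn, ∀ᵐ x ∂(volume : Measure (X2 d)), u (x + latVec2 A₁ A₂ mn) = u x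

/-- `u` is a.e. `k̃`-quasi-periodic: `u(r̃ + τ̃) = e^{i k̃·τ̃} u(r̃)`. -/
def QPerAE (A₁ A₂ : Matrix (Fin d) (Fin d) ℝ) (k : X2 d) (u : X2 d → ℂ) : Prop :=
  ∀ mn, ∀ᵐ x ∂(volume : Measure (X2 d)),
    u (x + latVec2 A₁ A₂ mn) =
      Complex.exp (Complex.I * (dot2 k (latVec2 A₁ A₂ mn) : ℂ)) * u x

/-- The Sobolev space `H²(T^{2d})` of `R̃`-periodic functions. -/
def MemH2T (A₁ A₂ : Matrix (Fin d) (Fin d) ℝ) (u : X2 d → ℂ) : Prop :=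
  MemH2On (μcell A₁ A₂) (IsPerTest A₁ A₂) u

/-- The quasi-periodic Sobolev space `H²_{k̃}(Γ̃)` (intrinsic description). -/
def MemH2Q (A₁ A₂ : Matrix (Fin d) (Fin d) ℝ) (k : X2 d) (u : X2 d → ℂ) : Prop :=
  MemH2On (μcell A₁ A₂) (IsQPerTest A₁ A₂ k) u

end Lat

section Fiber

variable {d : ℕ}

/-- The fiber (Bloch) operator
`H̃(k̃) = H̃ - i(k+k')·(∇_r + ∇_{r'}) + (1/2)|k+k'|²`. -/
def Hfiber (V₁ V₂ : Ed d → ℝ) (k : X2 d) (φ : X2 d → ℂ) : X2 d → ℂ := fun x =>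
  Hext V₁ V₂ φ x - Complex.I * pderiv ((k.1 + k.2, k.1 + k.2) : X2 d) φ x
    + (1/2 : ℂ) * (dotE (k.1 + k.2) (k.1 + k.2) : ℂ) * φ x

/-- The regularized fiber operator
`H̃^δ(k̃) = H̃(k̃) - (δ/2) Σ_i (∂_{r_i} - ∂_{r_i'})² - iδ(k-k')·(∇_r - ∇_{r'}) + (δ/2)|k-k'|²`. -/
def HfiberReg (V₁ V₂ : Ed d → ℝ) (δ : ℝ) (k : X2 d) (φ : X2 d → ℂ) : X2 d → ℂ := fun x =>
  Hfiber V₁ V₂ k φ x - (δ/2 : ℂ) * Dminus φ x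
    - Complex.I * (δ : ℂ) * pderiv ((k.1 - k.2, -(k.1 - k.2)) : X2 d) φ x
    + (δ/2 : ℂ) * (dotE (k.1 - k.2) (k.1 - k.2) : ℂ) * φ x

/-- The graph of the fiber operator `H̃(k̃)` in `L²(T^{2d})` with domain `H²(T^{2d})`. -/
def fiberGraph (V₁ V₂ : Ed d → ℝ) (A₁ A₂ : Matrix (Fin d) (Fin d) ℝ) (k : X2 d) :
    Set (L2M (μcell A₁ A₂) × L2M (μcell A₁ A₂)) :=
  graphOfM (μcell A₁ A₂) (MemH2T A₁ A₂) (IsPerTest A₁ A₂) (Hfiber V₁ V₂ k)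

/-- The graph of the regularized fiber operator `H̃^δ(k̃)` in `L²(T^{2d})`
with domain `H²(T^{2d})`. -/
def fiberRegGraph (V₁ V₂ : Ed d → ℝ) (A₁ A₂ : Matrix (Fin d) (Fin d) ℝ) (δ : ℝ) (k : X2 d) :
    Set (L2M (μcell A₁ A₂) × L2M (μcell A₁ A₂)) :=
  graphOfM (μcell A₁ A₂) (MemH2T A₁ A₂) (IsPerTest A₁ A₂) (HfiberReg V₁ V₂ δ k)

/-- The graph of the extended operator `H̃` in `L²(ℝ^{2d})` with domain `H²(ℝ^{2d})`. -/
def extGraph (V₁ V₂ : Ed d → ℝ) :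
    Set (L2M (volume : Measure (X2 d)) × L2M (volume : Measure (X2 d))) :=
  graphOfM volume MemH2 IsTest (Hext V₁ V₂)

/-- The graph of the regularized operator `H̃^δ` in `L²(ℝ^{2d})` with domain `H²(ℝ^{2d})`. -/
def regGraph (V₁ V₂ : Ed d → ℝ) (δ : ℝ) :
    Set (L2M (volume : Measure (X2 d)) × L2M (volume : Measure (X2 d))) :=
  graphOfM volume MemH2 IsTest (Hreg V₁ V₂ δ)

/-- The graph of the incommensurate operator `H` in `L²(ℝ^d)` with domain `H²(ℝ^d)`. -/
def incGraph (V₁ V₂ : Ed d → ℝ) :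
    Set (L2M (volume : Measure (Ed d)) × L2M (volume : Measure (Ed d))) :=
  graphOfM volume MemH2 IsTest (Hop V₁ V₂)

end Fiber

/-- The Bloch–Floquet transform
`(Uf)(r̃, k̃) = Σ_{τ̃ ∈ R̃} f(r̃ + τ̃) e^{-i k̃·τ̃}`. -/
def bloch {d : ℕ} (A₁ A₂ : Matrix (Fin d) (Fin d) ℝ) (f : X2 d → ℂ) (x k : X2 d) : ℂ :=
  ∑' mn : (Fin d → ℤ) × (Fin d → ℤ),
    f (x + latVec2 A₁ A₂ mn) * Complex.exp (-Complex.I * (dot2 k (latVec2 A₁ A₂ mn) : ℂ))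

/-- The two lattices `R₁, R₂` are incommensurate. -/
def Incommensurate {d : ℕ} (A₁ A₂ : Matrix (Fin d) (Fin d) ℝ) : Prop :=
  ∀ τ : Ed d, (fun x => x + τ) '' (lattice A₁ ∪ lattice A₂) = lattice A₁ ∪ lattice A₂ → τ = 0

end Incomm
namespace Incomm


private lemma lintegral_sq_of_eLpNorm_eq_one {α : Type*} [MeasurableSpace α]
    {μ : Measure α} {f : α → ℂ} (h : eLpNorm f 2 μ = 1) :
    ∫⁻ x, (‖f x‖₊ : ℝ≥0∞) ^ 2 ∂μ = 1 := by
  have h2 := eLpNorm_eq_lintegral_rpow_enorm_toReal (f := f) (μ := μ) (p := 2)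
    (by norm_num) (by norm_num)
  simp only [enorm_eq_nnnorm] at h2
  rw [h] at h2
  have ht : (2 : ℝ≥0∞).toReal = 2 := by norm_num
  rw [ht] at h2
  set X := ∫⁻ x, (‖f x‖₊ : ℝ≥0∞) ^ (2:ℝ) ∂μ with hX
  have hX1 : X = 1 := by
    calc X = (X ^ ((1:ℝ)/2)) ^ (2:ℝ) := by rw [← ENNReal.rpow_mul]; norm_num
    _ = (1:ℝ≥0∞) ^ (2:ℝ) := by rw [← h2]
    _ = 1 := by simp
  rw [← hX1, hX]
  congr 1
  ext x
  rw [← ENNReal.rpow_natCast]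
  norm_num

private lemma eLpNorm_two_eq' {α : Type*} [MeasurableSpace α] (μ : Measure α) (f : α → ℂ) :
    eLpNorm f 2 μ = (∫⁻ x, (‖f x‖₊ : ℝ≥0∞) ^ 2 ∂μ) ^ ((1:ℝ)/2) := by
  rw [eLpNorm_eq_lintegral_rpow_enorm_toReal (by norm_num) (by norm_num)]
  simp only [enorm_eq_nnnorm]
  have ht : (2 : ℝ≥0∞).toReal = 2 := by norm_num
  rw [ht]
  congr 1
  apply lintegral_congr
  intro x
  rw [← ENNReal.rpow_natCast]
  norm_num

/-- Let `V₁, V₂ : ℝ^d → ℝ` be bounded and uniformly continuous, let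
`(φ_n)` be normalized in `L²(ℝ^d)` and let `(η_n)` be normalized in `L²(ℝ^d)` and concentrate
at the origin. Then
`‖(V₁(p+q) + V₂(p−q) − V₁(p) − V₂(p)) φ_n(p) η_n(q)‖_{L²(ℝ^{2d})} → 0` as `n → ∞`. -/
theorem potential_concentration_estimate
    (d : ℕ) (hd : 1 ≤ d)
    (V₁ V₂ : Ed d → ℝ)
    (hb₁ : ∃ M : ℝ, ∀ x, |V₁ x| ≤ M) (hb₂ : ∃ M : ℝ, ∀ x, |V₂ x| ≤ M)
    (hu₁ : UniformContinuous V₁) (hu₂ : UniformContinuous V₂)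
    (φ η : ℕ → Ed d → ℂ)
    (hφm : ∀ n, MemLp (φ n) 2 (volume : Measure (Ed d)))
    (hφ1 : ∀ n, eLpNorm (φ n) 2 (volume : Measure (Ed d)) = 1)
    (hηm : ∀ n, MemLp (η n) 2 (volume : Measure (Ed d)))
    (hη1 : ∀ n, eLpNorm (η n) 2 (volume : Measure (Ed d)) = 1)
    (hconc : ∀ γ : ℝ, 0 < γ →
      Filter.Tendsto (fun n => ∫ q in {q : Ed d | γ < ‖q‖}, ‖η n q‖^2)
        Filter.atTop (nhds 0)) :
    Filter.Tendsto
      (fun n => eLpNorm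
        (fun pq : Ed d × Ed d =>
          ((V₁ (pq.1 + pq.2) : ℂ) + (V₂ (pq.1 - pq.2) : ℂ)
            - (V₁ pq.1 : ℂ) - (V₂ pq.1 : ℂ)) * φ n pq.1 * η n pq.2)
        2 (volume : Measure (Ed d × Ed d)))
      Filter.atTop (nhds 0) := by
  classical
  obtain ⟨M₁, hM₁⟩ := hb₁
  obtain ⟨M₂, hM₂⟩ := hb₂
  set C : ℝ := 2 * |M₁| + 2 * |M₂| + 1 with hCdef
  have hC0 : 0 < C := by rw [hCdef]; positivity
  set W : Ed d × Ed d → ℂ := fun pq =>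
    (V₁ (pq.1 + pq.2) : ℂ) + (V₂ (pq.1 - pq.2) : ℂ) - (V₁ pq.1 : ℂ) - (V₂ pq.1 : ℂ) with hWdef
  have hWcast : ∀ pq : Ed d × Ed d,
      W pq = (((V₁ (pq.1 + pq.2) - V₁ pq.1) + (V₂ (pq.1 - pq.2) - V₂ pq.1) : ℝ) : ℂ) := by
    intro pq; rw [hWdef]; push_cast; ring
  have hWb : ∀ pq : Ed d × Ed d, ‖W pq‖ ≤ C := by
    intro pq
    rw [hWcast pq]
    rw [show ‖((((V₁ (pq.1 + pq.2) - V₁ pq.1) + (V₂ (pq.1 - pq.2) - V₂ pq.1) : ℝ)) : ℂ)‖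
        = |(V₁ (pq.1 + pq.2) - V₁ pq.1) + (V₂ (pq.1 - pq.2) - V₂ pq.1)| from
      by rw [Complex.norm_real, Real.norm_eq_abs]]
    have a1 := abs_le.mp ((hM₁ (pq.1 + pq.2)).trans (le_abs_self M₁))
    have a2 := abs_le.mp ((hM₁ pq.1).trans (le_abs_self M₁))
    have b1 := abs_le.mp ((hM₂ (pq.1 - pq.2)).trans (le_abs_self M₂))
    have b2 := abs_le.mp ((hM₂ pq.1).trans (le_abs_self M₂))
    rw [abs_le, hCdef]
    constructor <;> nlinarith [a1.1, a1.2, a2.1, a2.2, b1.1, b1.2, b2.1, b2.2]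
  have key : ∀ (n : ℕ) (pq : Ed d × Ed d) {R : ℝ}, ‖W pq‖ ≤ R →
      (‖W pq * φ n pq.1 * η n pq.2‖₊ : ℝ≥0∞) ^ 2
        ≤ ENNReal.ofReal (R ^ 2) *
          ((‖φ n pq.1‖₊ : ℝ≥0∞) ^ 2 * (‖η n pq.2‖₊ : ℝ≥0∞) ^ 2) := by
    intro n pq R hR
    have hR0 : 0 ≤ R := (norm_nonneg _).trans hR
    have h1 : (‖W pq * φ n pq.1 * η n pq.2‖₊ : ℝ≥0∞)
        ≤ ENNReal.ofReal R * ((‖φ n pq.1‖₊ : ℝ≥0∞) * (‖η n pq.2‖₊ : ℝ≥0∞)) := by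
      rw [nnnorm_mul, nnnorm_mul, ENNReal.coe_mul, ENNReal.coe_mul, mul_assoc]
      gcongr
      rw [← enorm_eq_nnnorm, ← ofReal_norm]
      exact ENNReal.ofReal_le_ofReal hR
    calc (‖W pq * φ n pq.1 * η n pq.2‖₊ : ℝ≥0∞) ^ 2
        ≤ (ENNReal.ofReal R * ((‖φ n pq.1‖₊ : ℝ≥0∞) * (‖η n pq.2‖₊ : ℝ≥0∞))) ^ 2 := by
          gcongr
      _ = ENNReal.ofReal R ^ 2 * ((‖φ n pq.1‖₊ : ℝ≥0∞) ^ 2 * (‖η n pq.2‖₊ : ℝ≥0∞) ^ 2) := by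
          ring
      _ = ENNReal.ofReal (R ^ 2) *
          ((‖φ n pq.1‖₊ : ℝ≥0∞) ^ 2 * (‖η n pq.2‖₊ : ℝ≥0∞) ^ 2) := by
          rw [ENNReal.ofReal_pow hR0]
  have hφa : ∀ n, AEMeasurable (fun p => (‖φ n p‖₊ : ℝ≥0∞) ^ 2) (volume : Measure (Ed d)) :=
    fun n => ((hφm n).aestronglyMeasurable.enorm).pow_const 2
  have hηa : ∀ n, AEMeasurable (fun q => (‖η n q‖₊ : ℝ≥0∞) ^ 2) (volume : Measure (Ed d)) :=
    fun n => ((hηm n).aestronglyMeasurable.enorm).pow_const 2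
  have hIφ : ∀ n, ∫⁻ p, (‖φ n p‖₊ : ℝ≥0∞) ^ 2 = 1 :=
    fun n => lintegral_sq_of_eLpNorm_eq_one (hφ1 n)
  have hIη : ∀ n, ∫⁻ q, (‖η n q‖₊ : ℝ≥0∞) ^ 2 = 1 :=
    fun n => lintegral_sq_of_eLpNorm_eq_one (hη1 n)
  rw [ENNReal.tendsto_nhds_zero]
  intro ε hε
  obtain ⟨e, he0, heε⟩ : ∃ e : ℝ, 0 < e ∧ ENNReal.ofReal e ≤ ε := by
    rcases eq_or_ne ε ⊤ with h | h
    · exact ⟨1, one_pos, by simp [h]⟩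
    · exact ⟨ε.toReal, ENNReal.toReal_pos hε.ne' h, by rw [ENNReal.ofReal_toReal h]⟩
  obtain ⟨γ₁, hγ₁0, hγ₁⟩ := Metric.uniformContinuous_iff.mp hu₁ (e/4) (by positivity)
  obtain ⟨γ₂, hγ₂0, hγ₂⟩ := Metric.uniformContinuous_iff.mp hu₂ (e/4) (by positivity)
  set γ : ℝ := min γ₁ γ₂ / 2 with hγdef
  have hγ0 : 0 < γ := by rw [hγdef]; positivity
  set S : Set (Ed d) := {q : Ed d | γ < ‖q‖} with hSdef
  set A : Set (Ed d × Ed d) := {pq : Ed d × Ed d | ‖pq.2‖ ≤ γ} with hAdef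
  have hAmeas : MeasurableSet A :=
    (isClosed_le (continuous_norm.comp continuous_snd) continuous_const).measurableSet
  have hWsmall : ∀ pq : Ed d × Ed d, pq ∈ A → ‖W pq‖ ≤ e/2 := by
    intro pq hpq
    have hq : ‖pq.2‖ ≤ γ := hpq
    have hlt : ‖pq.2‖ < min γ₁ γ₂ :=
      lt_of_le_of_lt hq (by rw [hγdef]; exact half_lt_self (by positivity))
    have hd1 : dist (pq.1 + pq.2) pq.1 < γ₁ := by
      rw [dist_eq_norm, add_sub_cancel_left]; exact hlt.trans_le (min_le_left _ _)
    have hd2 : dist (pq.1 - pq.2) pq.1 < γ₂ := by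
      rw [dist_eq_norm, sub_sub_cancel_left, norm_neg]
      exact hlt.trans_le (min_le_right _ _)
    have hv1 : |V₁ (pq.1 + pq.2) - V₁ pq.1| < e/4 := by
      simpa [Real.dist_eq] using hγ₁ hd1
    have hv2 : |V₂ (pq.1 - pq.2) - V₂ pq.1| < e/4 := by
      simpa [Real.dist_eq] using hγ₂ hd2
    rw [hWcast pq]
    rw [show ‖((((V₁ (pq.1 + pq.2) - V₁ pq.1) + (V₂ (pq.1 - pq.2) - V₂ pq.1) : ℝ)) : ℂ)‖
        = |(V₁ (pq.1 + pq.2) - V₁ pq.1) + (V₂ (pq.1 - pq.2) - V₂ pq.1)| from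
      by rw [Complex.norm_real, Real.norm_eq_abs]]
    calc |(V₁ (pq.1 + pq.2) - V₁ pq.1) + (V₂ (pq.1 - pq.2) - V₂ pq.1)|
        ≤ |V₁ (pq.1 + pq.2) - V₁ pq.1| + |V₂ (pq.1 - pq.2) - V₂ pq.1| := abs_add_le _ _
      _ ≤ e/2 := by linarith
  set T : ℕ → ℝ≥0∞ := fun n => ∫⁻ q in S, (‖η n q‖₊ : ℝ≥0∞) ^ 2 with hTdef
  have hTeq : ∀ n, T n = ENNReal.ofReal (∫ q in S, ‖η n q‖ ^ 2) := by
    intro n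
    have hint : Integrable (fun q => ‖η n q‖ ^ 2) ((volume : Measure (Ed d)).restrict S) := by
      have := ((hηm n).restrict S).integrable_norm_rpow (p := 2) (by norm_num) (by norm_num)
      have ht : (2 : ℝ≥0∞).toReal = 2 := by norm_num
      rw [ht] at this
      have heq : (fun q => ‖η n q‖ ^ (2:ℝ)) = fun q => ‖η n q‖ ^ 2 := by
        funext q
        rw [show ((2:ℝ)) = ((2:ℕ):ℝ) by norm_num, Real.rpow_natCast]
      rwa [heq] at this
    rw [hTdef]
    rw [MeasureTheory.ofReal_integral_eq_lintegral_ofReal hint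
      (Filter.Eventually.of_forall fun q => by positivity)]
    apply lintegral_congr
    intro q
    rw [ENNReal.ofReal_pow (norm_nonneg _), ofReal_norm, enorm_eq_nnnorm]
  have hT0 : Tendsto T atTop (𝓝 0) := by
    have h1 := ENNReal.tendsto_ofReal (hconc γ hγ0)
    rw [ENNReal.ofReal_zero] at h1
    have heq : T = fun n => ENNReal.ofReal (∫ q in {q : Ed d | γ < ‖q‖}, ‖η n q‖ ^ 2) := by
      funext n; rw [hTeq n, hSdef]
    rw [heq]
    exact h1
  rw [ENNReal.tendsto_nhds_zero] at hT0
  have hev := hT0 (ENNReal.ofReal ((e^2/2) / C^2))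
    (ENNReal.ofReal_pos.mpr (by positivity))
  filter_upwards [hev] with n hn
  have hFeq : (fun pq : Ed d × Ed d =>
      ((V₁ (pq.1 + pq.2) : ℂ) + (V₂ (pq.1 - pq.2) : ℂ) - (V₁ pq.1 : ℂ) - (V₂ pq.1 : ℂ))
        * φ n pq.1 * η n pq.2)
      = fun pq : Ed d × Ed d => W pq * φ n pq.1 * η n pq.2 := by
    funext pq; rw [hWdef]
  rw [hFeq, eLpNorm_two_eq']
  have hprodA : AEMeasurable
      (fun pq : Ed d × Ed d => (‖φ n pq.1‖₊ : ℝ≥0∞) ^ 2 * (‖η n pq.2‖₊ : ℝ≥0∞) ^ 2)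
      ((volume : Measure (Ed d)).prod (volume : Measure (Ed d))) :=
    ((hφa n).comp_quasiMeasurePreserving Measure.quasiMeasurePreserving_fst).mul
      ((hηa n).comp_quasiMeasurePreserving Measure.quasiMeasurePreserving_snd)
  have hprodAc : AEMeasurable
      (fun pq : Ed d × Ed d => (‖φ n pq.1‖₊ : ℝ≥0∞) ^ 2 * (‖η n pq.2‖₊ : ℝ≥0∞) ^ 2)
      ((volume : Measure (Ed d)).prod ((volume : Measure (Ed d)).restrict S)) :=
    ((hφa n).comp_quasiMeasurePreserving Measure.quasiMeasurePreserving_fst).mul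
      (((hηa n).restrict).comp_quasiMeasurePreserving Measure.quasiMeasurePreserving_snd)
  have hpartA : (∫⁻ pq in A, (‖W pq * φ n pq.1 * η n pq.2‖₊ : ℝ≥0∞) ^ 2)
      ≤ ENNReal.ofReal (e^2/2) := by
    have hle : (∫⁻ pq in A, (‖W pq * φ n pq.1 * η n pq.2‖₊ : ℝ≥0∞) ^ 2)
        ≤ ∫⁻ pq : Ed d × Ed d, ENNReal.ofReal ((e/2)^2) *
            ((‖φ n pq.1‖₊ : ℝ≥0∞) ^ 2 * (‖η n pq.2‖₊ : ℝ≥0∞) ^ 2) := by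
      rw [← lintegral_indicator hAmeas]
      apply lintegral_mono
      intro pq
      by_cases hpq : pq ∈ A
      · rw [Set.indicator_of_mem hpq]
        exact key n pq (hWsmall pq hpq)
      · rw [Set.indicator_of_notMem hpq]; exact zero_le
    refine hle.trans ?_
    rw [Measure.volume_eq_prod, lintegral_const_mul'' _ hprodA,
      lintegral_prod_mul (hφa n) (hηa n), hIφ n, hIη n]
    simp only [mul_one, one_mul]
    apply ENNReal.ofReal_le_ofReal
    nlinarith [sq_nonneg e]
  have hpartAc : (∫⁻ pq in Aᶜ, (‖W pq * φ n pq.1 * η n pq.2‖₊ : ℝ≥0∞) ^ 2)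
      ≤ ENNReal.ofReal (C^2) * T n := by
    have hAc : (volume : Measure (Ed d × Ed d)).restrict Aᶜ
        = (volume : Measure (Ed d)).prod ((volume : Measure (Ed d)).restrict S) := by
      have h1 : Aᶜ = (Set.univ : Set (Ed d)) ×ˢ S := by
        ext pq
        simp [hAdef, hSdef, not_le]
      rw [h1, Measure.volume_eq_prod, ← Measure.prod_restrict, Measure.restrict_univ]
    calc (∫⁻ pq in Aᶜ, (‖W pq * φ n pq.1 * η n pq.2‖₊ : ℝ≥0∞) ^ 2)
        ≤ ∫⁻ pq in Aᶜ, ENNReal.ofReal (C^2) *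
            ((‖φ n pq.1‖₊ : ℝ≥0∞) ^ 2 * (‖η n pq.2‖₊ : ℝ≥0∞) ^ 2) :=
          lintegral_mono fun pq => key n pq (hWb pq)
      _ = ENNReal.ofReal (C^2) * T n := by
          rw [hAc, lintegral_const_mul'' _ hprodAc,
            lintegral_prod_mul (hφa n) ((hηa n).restrict), hIφ n, one_mul, hTdef]
  calc (∫⁻ pq : Ed d × Ed d, (‖W pq * φ n pq.1 * η n pq.2‖₊ : ℝ≥0∞) ^ 2) ^ ((1:ℝ)/2)
      ≤ (ENNReal.ofReal (e^2)) ^ ((1:ℝ)/2) := by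
        apply ENNReal.rpow_le_rpow _ (by norm_num)
        rw [← lintegral_add_compl
          (fun pq : Ed d × Ed d => (‖W pq * φ n pq.1 * η n pq.2‖₊ : ℝ≥0∞) ^ 2) hAmeas]
        calc (∫⁻ pq in A, (‖W pq * φ n pq.1 * η n pq.2‖₊ : ℝ≥0∞) ^ 2)
              + ∫⁻ pq in Aᶜ, (‖W pq * φ n pq.1 * η n pq.2‖₊ : ℝ≥0∞) ^ 2
            ≤ ENNReal.ofReal (e^2/2) + ENNReal.ofReal (C^2) * T n :=
              add_le_add hpartA hpartAc
          _ ≤ ENNReal.ofReal (e^2/2) + ENNReal.ofReal (e^2/2) := by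
              apply add_le_add_right
              calc ENNReal.ofReal (C^2) * T n
                  ≤ ENNReal.ofReal (C^2) * ENNReal.ofReal ((e^2/2) / C^2) :=
                    mul_le_mul_right hn _
                _ = ENNReal.ofReal (e^2/2) := by
                    rw [← ENNReal.ofReal_mul (by positivity)]
                    congr 1
                    field_simp
          _ = ENNReal.ofReal (e^2) := by
              rw [← ENNReal.ofReal_add (by positivity) (by positivity)]
              norm_num
    _ = ENNReal.ofReal e := by
        rw [ENNReal.ofReal_rpow_of_nonneg (by positivity) (by norm_num)]
        congr 1
        rw [show ((e:ℝ)^2) = e ^ ((2:ℕ):ℝ) by rw [Real.rpow_natCast],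
          ← Real.rpow_mul he0.le]
        norm_num
    _ ≤ ε := heε


end Incomm
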